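/- arXiv:1705.06334 — 4 statements merged into one kernel-verified Lean document; each statement's English description precedes it below -/
import Mathlib

section
/- Let λ : (0,∞) → [0,∞) be slowly varying, 1 ≤ r < ∞ and ε > 0. Then there exist positive constants c₁, c₂ such that for all x ∈ (0,∞): c₁ x^ε λ(x) ≤ (∫₀ˣ t^{εr−1} λ(t)^r dt)^{1/r} ≤ c₂ x^ε λ(x). -/
/-! Write the integrand as `t^((ε-δ)r-1) (t^δ λ t)^r = t^((ε+δ)r-1) (t^(-δ) λ t)^r` with
`δ = ε/2`. Slow variation makes `t^δ λ t` almost increasing and `t^(-δ) λ t` almost decreasing,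
so on `(0, x)` the first bracket is at most a constant times `x^δ λ x` and the second at least a
constant times `x^(-δ) λ x`. Integrating the remaining pure powers of `t` bounds the integral above
and below by constant multiples of `(x^ε λ x)^r`, and taking `r`-th roots finishes. -/

open MeasureTheory Set Real


/-- `a` is slowly varying on `I`. -/
def SlowlyVaryingOn (a : ℝ → ℝ) (I : Set ℝ) : Prop :=
  ∀ ε : ℝ, 0 < ε → ∃ g₁ g₂ : ℝ → ℝ, MonotoneOn g₁ I ∧ AntitoneOn g₂ I ∧
    ∃ c₁ c₂ : ℝ, 0 < c₁ ∧ 0 < c₂ ∧ ∀ t ∈ I,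
      c₁ * g₁ t ≤ t ^ ε * a t ∧ t ^ ε * a t ≤ c₂ * g₁ t ∧
      c₁ * g₂ t ≤ t ^ (-ε) * a t ∧ t ^ (-ε) * a t ≤ c₂ * g₂ t

lemma le_div_mul_of_le_mul_of_mul_le {a b u v c₁ c₂ : ℝ} (hc₁ : 0 < c₁) (hc₂ : 0 ≤ c₂)
    (ha : a ≤ c₂ * u) (hb : c₁ * v ≤ b) (huv : u ≤ v) : a ≤ c₂ / c₁ * b :=
  calc a ≤ c₂ * u := ha
    _ ≤ c₂ * v := by gcongr
    _ = c₂ / c₁ * (c₁ * v) := by field_simp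
    _ ≤ c₂ / c₁ * b := by gcongr

namespace SlowlyVaryingOn

variable {a : ℝ → ℝ} {I : Set ℝ} {δ : ℝ}

lemma exists_rpow_mul_le_of_le (h : SlowlyVaryingOn a I) (hδ : 0 < δ) :
    ∃ C > 0, ∀ t ∈ I, ∀ x ∈ I, t ≤ x → t ^ δ * a t ≤ C * (x ^ δ * a x) := by
  obtain ⟨g, _, hg, _, c₁, c₂, hc₁, hc₂, hbd⟩ := h δ hδ
  exact ⟨c₂ / c₁, by positivity, fun t ht x hx htx =>
    le_div_mul_of_le_mul_of_mul_le hc₁ hc₂.le (hbd t ht).2.1 (hbd x hx).1 (hg ht hx htx)⟩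

lemma exists_rpow_neg_mul_le_of_le (h : SlowlyVaryingOn a I) (hδ : 0 < δ) :
    ∃ C > 0, ∀ t ∈ I, ∀ x ∈ I, t ≤ x → x ^ (-δ) * a x ≤ C * (t ^ (-δ) * a t) := by
  obtain ⟨_, g, _, hg, c₁, c₂, hc₁, hc₂, hbd⟩ := h δ hδ
  exact ⟨c₂ / c₁, by positivity, fun t ht x hx htx =>
    le_div_mul_of_le_mul_of_mul_le hc₁ hc₂.le (hbd x hx).2.2.2 (hbd t ht).2.2.1 (hg ht hx htx)⟩

end SlowlyVaryingOn

section PowerWeightedIntegrals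

variable {F : ℝ → ℝ} {M q x : ℝ}

lemma integral_Ioo_rpow_sub_one (hq : 0 < q) (hx : 0 ≤ x) :
    ∫ t in Ioo 0 x, t ^ (q - 1) = x ^ q / q := by
  rw [← integral_Ioc_eq_integral_Ioo, ← intervalIntegral.integral_of_le hx,
    integral_rpow (Or.inl (by linarith)), sub_add_cancel, zero_rpow hq.ne', sub_zero]

lemma integrableOn_Ioo_rpow_sub_one (hq : 0 < q) (hx : 0 < x) :
    IntegrableOn (fun t => t ^ (q - 1)) (Ioo 0 x) :=
  (intervalIntegral.integrableOn_Ioo_rpow_iff hx).2 (by linarith)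

lemma integrableOn_Ioo_of_norm_le_rpow (hq : 0 < q) (hx : 0 < x)
    (hF : AEStronglyMeasurable F (volume.restrict (Ioo 0 x)))
    (hle : ∀ t ∈ Ioo 0 x, ‖F t‖ ≤ M * t ^ (q - 1)) : IntegrableOn F (Ioo 0 x) :=
  ((integrableOn_Ioo_rpow_sub_one hq hx).const_mul M).mono' hF
    ((ae_restrict_iff' measurableSet_Ioo).2 (.of_forall hle))

lemma setIntegral_Ioo_le_of_le_rpow (hq : 0 < q) (hx : 0 < x) (hF : ∀ t ∈ Ioo 0 x, 0 ≤ F t)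
    (hle : ∀ t ∈ Ioo 0 x, F t ≤ M * t ^ (q - 1)) :
    ∫ t in Ioo 0 x, F t ≤ M * x ^ q / q := by
  rw [mul_div_assoc, ← integral_Ioo_rpow_sub_one hq hx.le, ← integral_const_mul]
  exact integral_mono_of_nonneg ((ae_restrict_iff' measurableSet_Ioo).2 (.of_forall hF))
    ((integrableOn_Ioo_rpow_sub_one hq hx).const_mul M)
    ((ae_restrict_iff' measurableSet_Ioo).2 (.of_forall hle))

lemma le_setIntegral_Ioo_of_rpow_le (hq : 0 < q) (hx : 0 < x) (hF : IntegrableOn F (Ioo 0 x))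
    (hle : ∀ t ∈ Ioo 0 x, M * t ^ (q - 1) ≤ F t) :
    M * x ^ q / q ≤ ∫ t in Ioo 0 x, F t := by
  rw [mul_div_assoc, ← integral_Ioo_rpow_sub_one hq hx.le, ← integral_const_mul]
  exact setIntegral_mono_on ((integrableOn_Ioo_rpow_sub_one hq hx).const_mul M) hF
    measurableSet_Ioo hle

end PowerWeightedIntegrals

lemma rpow_mul_sub_one_mul_rpow_eq {t y : ℝ} (ht : 0 < t) (hy : 0 ≤ y) (ε δ r : ℝ) :
    t ^ (ε * r - 1) * y ^ r = t ^ ((ε - δ) * r - 1) * (t ^ δ * y) ^ r := by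
  rw [mul_rpow (by positivity) hy, ← rpow_mul ht.le, ← mul_assoc, ← rpow_add ht]
  ring_nf

lemma rpow_mul_mul_rpow_sub_eq {x y C : ℝ} (hx : 0 < x) (hy : 0 ≤ y) (hC : 0 ≤ C) (ε δ r : ℝ) :
    (C * (x ^ δ * y)) ^ r * x ^ ((ε - δ) * r) = C ^ r * (x ^ ε * y) ^ r := by
  rw [mul_rpow hC (by positivity), rpow_mul hx.le, mul_assoc,
    ← mul_rpow (by positivity) (by positivity), mul_right_comm, ← rpow_add hx, add_sub_cancel]

lemma exists_rpow_inv_bounds {S : Set ℝ} {I Y : ℝ → ℝ} {r : ℝ} (hr : 0 < r)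
    (hY : ∀ x ∈ S, 0 ≤ Y x) {A B : ℝ} (hA : 0 < A) (hB : 0 < B)
    (hbd : ∀ x ∈ S, A * Y x ^ r ≤ I x ∧ I x ≤ B * Y x ^ r) :
    ∃ c₁ c₂ : ℝ, 0 < c₁ ∧ 0 < c₂ ∧ ∀ x ∈ S, c₁ * Y x ≤ I x ^ r⁻¹ ∧ I x ^ r⁻¹ ≤ c₂ * Y x := by
  refine ⟨A ^ r⁻¹, B ^ r⁻¹, by positivity, by positivity, fun x hx => ?_⟩
  have hY := hY x hx
  have hI : 0 ≤ I x := (by positivity : 0 ≤ A * Y x ^ r).trans (hbd x hx).1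
  constructor
  · rw [le_rpow_inv_iff_of_pos (by positivity) hI hr, mul_rpow (by positivity) hY,
      rpow_inv_rpow hA.le hr.ne']
    exact (hbd x hx).1
  · rw [rpow_inv_le_iff_of_pos hI (by positivity) hr, mul_rpow (by positivity) hY,
      rpow_inv_rpow hB.le hr.ne']
    exact (hbd x hx).2

namespace SlowlyVaryingOn

variable {l : ℝ → ℝ} {ε r δ : ℝ}

lemma exists_integrand_le_rpow (hsv : SlowlyVaryingOn l (Ioi 0))
    (hl0 : ∀ t ∈ Ioi (0 : ℝ), 0 ≤ l t) (hr : 0 < r) (hδ : 0 < δ) :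
    ∃ C > 0, ∀ x, ∀ t ∈ Ioo 0 x,
      t ^ (ε * r - 1) * l t ^ r ≤ (C * (x ^ δ * l x)) ^ r * t ^ ((ε - δ) * r - 1) := by
  obtain ⟨C, hC, hle⟩ := hsv.exists_rpow_mul_le_of_le hδ
  refine ⟨C, hC, fun x t ht => ?_⟩
  have ht0 : 0 < t := ht.1
  have hlt := hl0 t ht0
  rw [rpow_mul_sub_one_mul_rpow_eq ht0 hlt ε δ r, mul_comm]
  gcongr ?_ ^ r * _
  exact hle t ht0 x (ht0.trans ht.2) ht.2.le

lemma exists_rpow_le_integrand (hsv : SlowlyVaryingOn l (Ioi 0))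
    (hl0 : ∀ t ∈ Ioi (0 : ℝ), 0 ≤ l t) (hr : 0 < r) (hδ : 0 < δ) :
    ∃ C > 0, ∀ x, ∀ t ∈ Ioo 0 x,
      (C * (x ^ (-δ) * l x)) ^ r * t ^ ((ε + δ) * r - 1) ≤ t ^ (ε * r - 1) * l t ^ r := by
  obtain ⟨C, hC, hle⟩ := hsv.exists_rpow_neg_mul_le_of_le hδ
  refine ⟨C⁻¹, inv_pos.2 hC, fun x t ht => ?_⟩
  have ht0 : 0 < t := ht.1
  have hx0 : 0 < x := ht0.trans ht.2
  have hlx := hl0 x hx0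
  rw [rpow_mul_sub_one_mul_rpow_eq ht0 (hl0 t ht0) ε (-δ) r, sub_neg_eq_add,
    mul_comm (t ^ _)]
  gcongr ?_ ^ r * _
  rw [inv_mul_le_iff₀ hC]
  exact hle t ht0 x hx0 ht.2.le

end SlowlyVaryingOn

theorem stmt2 (l : ℝ → ℝ) (hl0 : ∀ t ∈ Set.Ioi (0:ℝ), 0 ≤ l t) (hlm : Measurable l)
    (hsv : SlowlyVaryingOn l (Set.Ioi 0)) (r ε : ℝ) (hr : 1 ≤ r) (hε : 0 < ε) :
    ∃ c₁ c₂ : ℝ, 0 < c₁ ∧ 0 < c₂ ∧ ∀ x ∈ Set.Ioi (0:ℝ),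
      c₁ * (x ^ ε * l x) ≤ (∫ t in Set.Ioo 0 x, t ^ (ε * r - 1) * l t ^ r) ^ r⁻¹ ∧
      (∫ t in Set.Ioo 0 x, t ^ (ε * r - 1) * l t ^ r) ^ r⁻¹ ≤ c₂ * (x ^ ε * l x) := by
  have hr0 : 0 < r := by linarith
  have hδ : 0 < ε / 2 := half_pos hε
  obtain ⟨C₁, hC₁, hup⟩ := hsv.exists_integrand_le_rpow (ε := ε) hl0 hr0 hδ
  obtain ⟨C₂, hC₂, hlo⟩ := hsv.exists_rpow_le_integrand (ε := ε) hl0 hr0 hδ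
  have hq₁ : 0 < (ε - ε / 2) * r := mul_pos (by linarith) hr0
  have hq₂ : 0 < (ε + ε / 2) * r := by positivity
  have hF : ∀ x, ∀ t ∈ Ioo 0 x, 0 ≤ t ^ (ε * r - 1) * l t ^ r := fun x t ht =>
    mul_nonneg (rpow_nonneg ht.1.le _) (rpow_nonneg (hl0 t ht.1) _)
  refine exists_rpow_inv_bounds hr0
    (fun x hx => mul_nonneg (rpow_nonneg (le_of_lt hx) _) (hl0 x hx))
    (A := C₂ ^ r / ((ε + ε / 2) * r)) (B := C₁ ^ r / ((ε - ε / 2) * r))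
    (by positivity) (by positivity) fun x hx => ⟨?_, ?_⟩
  · have hint : IntegrableOn (fun t => t ^ (ε * r - 1) * l t ^ r) (Ioo 0 x) :=
      integrableOn_Ioo_of_norm_le_rpow hq₁ hx (by fun_prop) fun t ht => by
        rw [norm_of_nonneg (hF x t ht)]
        exact hup x t ht
    calc C₂ ^ r / ((ε + ε / 2) * r) * (x ^ ε * l x) ^ r
        = (C₂ * (x ^ (-(ε / 2)) * l x)) ^ r * x ^ ((ε + ε / 2) * r) / ((ε + ε / 2) * r) := by
          rw [← sub_neg_eq_add, rpow_mul_mul_rpow_sub_eq hx (hl0 x hx) hC₂.le]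
          ring
      _ ≤ _ := le_setIntegral_Ioo_of_rpow_le hq₂ hx hint (hlo x)
  · calc _ ≤ (C₁ * (x ^ (ε / 2) * l x)) ^ r * x ^ ((ε - ε / 2) * r) / ((ε - ε / 2) * r) :=
          setIntegral_Ioo_le_of_le_rpow hq₁ hx (hF x) (hup x)
      _ = C₁ ^ r / ((ε - ε / 2) * r) * (x ^ ε * l x) ^ r := by
          rw [rpow_mul_mul_rpow_sub_eq hx (hl0 x hx) hC₁.le]
          ring
end

section
/- Let λ : (0,∞) → [0,∞) be slowly varying, 1 ≤ r < ∞ and ε > 0. Then there exist positive constants c₁, c₂ such that for all x ∈ (0,∞): c₁ x^{−ε} λ(x) ≤ (∫ₓ^∞ t^{−εr−1} λ(t)^r dt)^{1/r} ≤ c₂ x^{−ε} λ(x). -/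
open MeasureTheory Set Real


/-!
Write `φ t = t ^ (-ε) * l t`, so that the integrand is `φ t ^ r / t`. Slow variation with
exponent `δ = ε / 2` traps `φ t / φ x` between multiples of `(x / t) ^ (ε + δ)` and
`(x / t) ^ (ε - δ)` for `t > x`, and `∫ t in Ioi x, (x / t) ^ s / t = 1 / s` for every
`s > 0`; so both sides of the estimate are constant multiples of `φ x`.
-/

namespace SlowlyVaryingOn

variable {a : ℝ → ℝ} {I : Set ℝ} {δ : ℝ}

theorem exists_rpow_mul_le (h : SlowlyVaryingOn a I) (hδ : 0 < δ) :
    ∃ C > 0, ∀ x ∈ I, ∀ t ∈ I, x ≤ t → x ^ δ * a x ≤ C * (t ^ δ * a t) := by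
  obtain ⟨g, _, hg, _, c₁, c₂, hc₁, hc₂, hbound⟩ := h δ hδ
  refine ⟨c₂ / c₁, by positivity, fun x hx t ht hxt => ?_⟩
  calc x ^ δ * a x ≤ c₂ * g x := (hbound x hx).2.1
    _ ≤ c₂ * g t := by gcongr; exact hg hx ht hxt
    _ = c₂ / c₁ * (c₁ * g t) := by field_simp
    _ ≤ c₂ / c₁ * (t ^ δ * a t) := by gcongr ?_ * ?_; exact (hbound t ht).1

theorem exists_rpow_neg_mul_le (h : SlowlyVaryingOn a I) (hδ : 0 < δ) :
    ∃ C > 0, ∀ x ∈ I, ∀ t ∈ I, x ≤ t → t ^ (-δ) * a t ≤ C * (x ^ (-δ) * a x) := by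
  obtain ⟨_, g, _, hg, c₁, c₂, hc₁, hc₂, hbound⟩ := h δ hδ
  refine ⟨c₂ / c₁, by positivity, fun x hx t ht hxt => ?_⟩
  calc t ^ (-δ) * a t ≤ c₂ * g t := (hbound t ht).2.2.2
    _ ≤ c₂ * g x := by gcongr; exact hg hx ht hxt
    _ = c₂ / c₁ * (c₁ * g x) := by field_simp
    _ ≤ c₂ / c₁ * (x ^ (-δ) * a x) := by gcongr ?_ * ?_; exact (hbound x hx).2.2.1

end SlowlyVaryingOn

section PowerWeights

variable {x t : ℝ}

theorem rpow_neg_mul_rpow_sub (hx : 0 < x) (ht : 0 < t) (p q : ℝ) :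
    t ^ (-p) * x ^ (p - q) = (x / t) ^ p * x ^ (-q) := by
  rw [div_rpow hx.le ht.le, rpow_neg ht.le, rpow_sub hx, rpow_neg hx.le]
  field_simp

theorem rpow_neg_mul_le_of_rpow_neg_mul_le {a : ℝ → ℝ} {C δ : ℝ} (hx : 0 < x) (ht : 0 < t)
    (h : t ^ (-δ) * a t ≤ C * (x ^ (-δ) * a x)) (ε : ℝ) :
    t ^ (-ε) * a t ≤ C * (x ^ (-ε) * a x) * (x / t) ^ (ε - δ) := by
  calc t ^ (-ε) * a t = t ^ (-(ε - δ)) * (t ^ (-δ) * a t) := by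
        rw [← mul_assoc, ← rpow_add ht]; ring_nf
    _ ≤ t ^ (-(ε - δ)) * (C * (x ^ (-δ) * a x)) := by gcongr
    _ = C * (t ^ (-(ε - δ)) * x ^ ((ε - δ) - ε) * a x) := by ring_nf
    _ = C * (x ^ (-ε) * a x) * (x / t) ^ (ε - δ) := by
        rw [rpow_neg_mul_rpow_sub hx ht]; ring

theorem le_rpow_neg_mul_of_rpow_mul_le {a : ℝ → ℝ} {C δ : ℝ} (hx : 0 < x) (ht : 0 < t)
    (hC : 0 < C) (h : x ^ δ * a x ≤ C * (t ^ δ * a t)) (ε : ℝ) :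
    C⁻¹ * (x ^ (-ε) * a x) * (x / t) ^ (ε + δ) ≤ t ^ (-ε) * a t := by
  calc C⁻¹ * (x ^ (-ε) * a x) * (x / t) ^ (ε + δ)
        = C⁻¹ * ((x / t) ^ (ε + δ) * x ^ (-ε)) * a x := by ring
    _ = C⁻¹ * t ^ (-(ε + δ)) * (x ^ δ * a x) := by
        rw [← rpow_neg_mul_rpow_sub hx ht, add_sub_cancel_left]; ring
    _ ≤ C⁻¹ * t ^ (-(ε + δ)) * (C * (t ^ δ * a t)) := by gcongr
    _ = t ^ (-(ε + δ)) * t ^ δ * a t := by field_simp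
    _ = t ^ (-ε) * a t := by rw [← rpow_add ht]; ring_nf

theorem rpow_neg_mul_sub_one_mul_rpow (ht : 0 < t) {y : ℝ} (hy : 0 ≤ y) (ε r : ℝ) :
    t ^ (-(ε * r) - 1) * y ^ r = (t ^ (-ε) * y) ^ r * t⁻¹ := by
  rw [rpow_sub_one ht.ne', mul_rpow (rpow_nonneg ht.le _) hy, ← rpow_mul ht.le]
  ring_nf

theorem div_rpow_mul_inv_eq (hx : 0 < x) (ht : 0 < t) (s : ℝ) :
    (x / t) ^ s * t⁻¹ = x ^ s * t ^ (-s - 1) := by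
  rw [div_rpow hx.le ht.le, rpow_sub_one ht.ne', rpow_neg ht.le]
  ring

theorem integrableOn_Ioi_div_rpow_mul_inv (hx : 0 < x) {s : ℝ} (hs : 0 < s) :
    IntegrableOn (fun t => (x / t) ^ s * t⁻¹) (Ioi x) := by
  refine IntegrableOn.congr_fun
    ((integrableOn_Ioi_rpow_of_lt (a := -s - 1) (by linarith) hx).const_mul (x ^ s))
    (fun t ht => ?_) measurableSet_Ioi
  exact (div_rpow_mul_inv_eq hx (hx.trans ht) s).symm

theorem integral_Ioi_div_rpow_mul_inv (hx : 0 < x) {s : ℝ} (hs : 0 < s) :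
    ∫ t in Ioi x, (x / t) ^ s * t⁻¹ = s⁻¹ := by
  rw [setIntegral_congr_fun measurableSet_Ioi
      (fun t ht => div_rpow_mul_inv_eq hx (hx.trans ht) s),
    integral_const_mul, integral_Ioi_rpow_of_lt (by linarith) hx, sub_add_cancel,
    neg_div_neg_eq, ← mul_div_assoc, ← rpow_add hx, add_neg_cancel, rpow_zero, one_div]

end PowerWeights

section IntegralBounds

variable {φ : ℝ → ℝ} {x r : ℝ}

theorem mul_div_rpow_rpow_mul_inv {m t : ℝ} (hm : 0 ≤ m) (hx : 0 < x) (ht : 0 < t) (a : ℝ) :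
    (m * (x / t) ^ a) ^ r * t⁻¹ = m ^ r * ((x / t) ^ (a * r) * t⁻¹) := by
  rw [mul_rpow hm (rpow_nonneg (div_pos hx ht).le _), ← rpow_mul (div_pos hx ht).le]
  ring

theorem rpow_mul_inv_le_of_le_mul_div_rpow {M b : ℝ} (hx : 0 < x) (hr : 0 < r) (hM : 0 ≤ M)
    (hbound : ∀ t ∈ Ioi x, 0 ≤ φ t ∧ φ t ≤ M * (x / t) ^ b) :
    ∀ t ∈ Ioi x, φ t ^ r * t⁻¹ ≤ M ^ r * ((x / t) ^ (b * r) * t⁻¹) := by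
  intro t ht
  have ht0 : 0 < t := hx.trans ht
  rw [← mul_div_rpow_rpow_mul_inv hM hx ht0]
  gcongr
  exacts [(hbound t ht).1, (hbound t ht).2]

theorem integrableOn_Ioi_rpow_mul_inv {M b : ℝ} (hx : 0 < x) (hr : 0 < r) (hb : 0 < b)
    (hM : 0 ≤ M) (hφ : Measurable φ) (hbound : ∀ t ∈ Ioi x, 0 ≤ φ t ∧ φ t ≤ M * (x / t) ^ b) :
    IntegrableOn (fun t => φ t ^ r * t⁻¹) (Ioi x) := by
  refine Integrable.mono' ((integrableOn_Ioi_div_rpow_mul_inv hx (mul_pos hb hr)).const_mul (M ^ r))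
    (by fun_prop) ?_
  filter_upwards [self_mem_ae_restrict measurableSet_Ioi] with t ht
  rw [norm_of_nonneg (by have := (hbound t ht).1; have : 0 < t := hx.trans ht; positivity)]
  exact rpow_mul_inv_le_of_le_mul_div_rpow hx hr hM hbound t ht

theorem rpow_inv_setIntegral_Ioi_rpow_mul_inv_le {M b : ℝ} (hx : 0 < x) (hr : 0 < r)
    (hb : 0 < b) (hM : 0 ≤ M) (hφ : Measurable φ)
    (hbound : ∀ t ∈ Ioi x, 0 ≤ φ t ∧ φ t ≤ M * (x / t) ^ b) :
    (∫ t in Ioi x, φ t ^ r * t⁻¹) ^ r⁻¹ ≤ (b * r)⁻¹ ^ r⁻¹ * M := by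
  have hint := integrableOn_Ioi_rpow_mul_inv hx hr hb hM hφ hbound
  have hle : ∫ t in Ioi x, φ t ^ r * t⁻¹ ≤ (b * r)⁻¹ * M ^ r := by
    calc ∫ t in Ioi x, φ t ^ r * t⁻¹
        ≤ ∫ t in Ioi x, M ^ r * ((x / t) ^ (b * r) * t⁻¹) :=
          setIntegral_mono_on hint ((integrableOn_Ioi_div_rpow_mul_inv hx
            (mul_pos hb hr)).const_mul _) measurableSet_Ioi
            (rpow_mul_inv_le_of_le_mul_div_rpow hx hr hM hbound)
      _ = (b * r)⁻¹ * M ^ r := by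
          rw [integral_const_mul, integral_Ioi_div_rpow_mul_inv hx (mul_pos hb hr), mul_comm]
  have hnonneg : 0 ≤ ∫ t in Ioi x, φ t ^ r * t⁻¹ :=
    setIntegral_nonneg measurableSet_Ioi fun t ht => by
      have := (hbound t ht).1; have : 0 < t := hx.trans ht; positivity
  calc (∫ t in Ioi x, φ t ^ r * t⁻¹) ^ r⁻¹ ≤ ((b * r)⁻¹ * M ^ r) ^ r⁻¹ := by gcongr
    _ = (b * r)⁻¹ ^ r⁻¹ * M := by
        rw [mul_rpow (by positivity) (by positivity), rpow_rpow_inv hM hr.ne']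

theorem le_rpow_inv_setIntegral_Ioi_rpow_mul_inv {m a : ℝ} (hx : 0 < x) (hr : 0 < r)
    (ha : 0 < a) (hm : 0 ≤ m) (hint : IntegrableOn (fun t => φ t ^ r * t⁻¹) (Ioi x))
    (hbound : ∀ t ∈ Ioi x, m * (x / t) ^ a ≤ φ t) :
    (a * r)⁻¹ ^ r⁻¹ * m ≤ (∫ t in Ioi x, φ t ^ r * t⁻¹) ^ r⁻¹ := by
  have hle : (a * r)⁻¹ * m ^ r ≤ ∫ t in Ioi x, φ t ^ r * t⁻¹ := by
    calc (a * r)⁻¹ * m ^ r = ∫ t in Ioi x, (m * (x / t) ^ a) ^ r * t⁻¹ := by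
          rw [setIntegral_congr_fun measurableSet_Ioi
              fun t ht => mul_div_rpow_rpow_mul_inv hm hx (hx.trans ht) a,
            integral_const_mul, integral_Ioi_div_rpow_mul_inv hx (mul_pos ha hr), mul_comm]
      _ ≤ ∫ t in Ioi x, φ t ^ r * t⁻¹ := by
          refine setIntegral_mono_on ?_ hint measurableSet_Ioi fun t ht => ?_
          · exact IntegrableOn.congr_fun ((integrableOn_Ioi_div_rpow_mul_inv hx
              (mul_pos ha hr)).const_mul (m ^ r)) (fun t ht => (mul_div_rpow_rpow_mul_inv hm hx
                (hx.trans ht) a).symm) measurableSet_Ioi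
          · have ht0 : 0 < t := hx.trans ht
            gcongr
            exact hbound t ht
  calc (a * r)⁻¹ ^ r⁻¹ * m = ((a * r)⁻¹ * m ^ r) ^ r⁻¹ := by
        rw [mul_rpow (by positivity) (by positivity), rpow_rpow_inv hm hr.ne']
    _ ≤ (∫ t in Ioi x, φ t ^ r * t⁻¹) ^ r⁻¹ := by gcongr

end IntegralBounds

theorem stmt3 (l : ℝ → ℝ) (hl0 : ∀ t ∈ Set.Ioi (0:ℝ), 0 ≤ l t) (hlm : Measurable l)
    (hsv : SlowlyVaryingOn l (Set.Ioi 0)) (r ε : ℝ) (hr : 1 ≤ r) (hε : 0 < ε) :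
    ∃ c₁ c₂ : ℝ, 0 < c₁ ∧ 0 < c₂ ∧ ∀ x ∈ Set.Ioi (0:ℝ),
      c₁ * (x ^ (-ε) * l x) ≤ (∫ t in Set.Ioi x, t ^ (-(ε * r) - 1) * l t ^ r) ^ r⁻¹ ∧
      (∫ t in Set.Ioi x, t ^ (-(ε * r) - 1) * l t ^ r) ^ r⁻¹ ≤ c₂ * (x ^ (-ε) * l x) := by
  have hr0 : 0 < r := by linarith
  have hδ : 0 < ε - ε / 2 := by linarith
  obtain ⟨C₁, hC₁, hinc⟩ := hsv.exists_rpow_mul_le (half_pos hε)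
  obtain ⟨C₂, hC₂, hdec⟩ := hsv.exists_rpow_neg_mul_le (half_pos hε)
  refine ⟨((ε + ε / 2) * r)⁻¹ ^ r⁻¹ * C₁⁻¹, ((ε - ε / 2) * r)⁻¹ ^ r⁻¹ * C₂,
    by positivity, by positivity, fun x (hx : 0 < x) => ?_⟩
  set φ : ℝ → ℝ := fun t => t ^ (-ε) * l t
  have hφ_nonneg (t : ℝ) (ht : 0 < t) : 0 ≤ φ t := mul_nonneg (rpow_nonneg ht.le _) (hl0 t ht)
  have hupper : ∀ t ∈ Ioi x, 0 ≤ φ t ∧ φ t ≤ C₂ * φ x * (x / t) ^ (ε - ε / 2) :=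
    fun t (ht : x < t) => ⟨hφ_nonneg t (hx.trans ht), rpow_neg_mul_le_of_rpow_neg_mul_le hx
      (hx.trans ht) (hdec x hx t (hx.trans ht) ht.le) ε⟩
  have hlower : ∀ t ∈ Ioi x, C₁⁻¹ * φ x * (x / t) ^ (ε + ε / 2) ≤ φ t :=
    fun t (ht : x < t) => le_rpow_neg_mul_of_rpow_mul_le hx (hx.trans ht) hC₁
      (hinc x hx t (hx.trans ht) ht.le) ε
  have hC₂φ : 0 ≤ C₂ * φ x := mul_nonneg hC₂.le (hφ_nonneg x hx)
  have hint := integrableOn_Ioi_rpow_mul_inv hx hr0 hδ hC₂φ (by fun_prop) hupper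
  rw [setIntegral_congr_fun measurableSet_Ioi fun t (ht : x < t) =>
    rpow_neg_mul_sub_one_mul_rpow (hx.trans ht) (hl0 t (hx.trans ht)) ε r, mul_assoc, mul_assoc]
  exact ⟨le_rpow_inv_setIntegral_Ioi_rpow_mul_inv hx hr0 (by positivity)
      (mul_nonneg (inv_nonneg.2 hC₁.le) (hφ_nonneg x hx)) hint hlower,
    rpow_inv_setIntegral_Ioi_rpow_mul_inv_le hx hr0 hδ hC₂φ (by fun_prop) hupper⟩
end

section
/- Let λ : (0,∞) → [0,∞) be slowly varying and 1 ≤ r < ∞. Then there exists c > 0 such that for all x ∈ (0,∞): (∫₀ˣ t^{−1} λ(t)^r dt)^{1/r} ≥ c·λ(x) and (∫ₓ^∞ t^{−1} λ(t)^r dt)^{1/r} ≥ c·λ(x) (where these integrals may be infinite). -/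
open MeasureTheory Set Real


/-!
Taking `ε = 1` in the definition, `t * λ(t)` is almost increasing and `λ(t) / t` almost
decreasing, so `λ(t) ≥ B λ(x)` for `t ∈ [x/2, 2x]` with some `B > 0` independent of `x`.
Both integrals dominate the integral over an interval `(a, 2a)` inside `[x/2, 2x]`, where
`t⁻¹ λ(t)^r ≥ (B λ(x))^r / (2a)`; the interval has length `a`, so each integral is at least
`(B λ(x))^r / 2`, and `(1/2)^(1/r) ≥ 1/2` gives `c = B / 2`.
-/

section QuasiMonotone

variable {α : Type*} [Preorder α] {f g : α → ℝ} {s : Set α} {c₁ c₂ : ℝ} {x t : α}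

theorem MonotoneOn.div_mul_le_of_le (hg : MonotoneOn g s) (hc₁ : 0 ≤ c₁) (hc₂ : 0 < c₂)
    (hlow : ∀ u ∈ s, c₁ * g u ≤ f u) (hup : ∀ u ∈ s, f u ≤ c₂ * g u)
    (hx : x ∈ s) (ht : t ∈ s) (hxt : x ≤ t) : c₁ / c₂ * f x ≤ f t :=
  calc c₁ / c₂ * f x ≤ c₁ / c₂ * (c₂ * g x) := by gcongr; exact hup x hx
    _ = c₁ * g x := by field_simp
    _ ≤ c₁ * g t := by gcongr; exact hg hx ht hxt
    _ ≤ f t := hlow t ht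

theorem AntitoneOn.div_mul_le_of_le (hg : AntitoneOn g s) (hc₁ : 0 ≤ c₁) (hc₂ : 0 < c₂)
    (hlow : ∀ u ∈ s, c₁ * g u ≤ f u) (hup : ∀ u ∈ s, f u ≤ c₂ * g u)
    (hx : x ∈ s) (ht : t ∈ s) (htx : t ≤ x) : c₁ / c₂ * f x ≤ f t :=
  calc c₁ / c₂ * f x ≤ c₁ / c₂ * (c₂ * g x) := by gcongr; exact hup x hx
    _ = c₁ * g x := by field_simp
    _ ≤ c₁ * g t := by gcongr; exact hg ht hx htx
    _ ≤ f t := hlow t ht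

end QuasiMonotone

theorem SlowlyVaryingOn.exists_pos_mul_le_of_mem_Icc {l : ℝ → ℝ}
    (hsv : SlowlyVaryingOn l (Ioi 0)) (hl0 : ∀ t ∈ Ioi (0 : ℝ), 0 ≤ l t) :
    ∃ B, 0 < B ∧ ∀ x ∈ Ioi (0 : ℝ), ∀ t ∈ Icc (x / 2) (2 * x), B * l x ≤ l t := by
  obtain ⟨g₁, g₂, hg₁, hg₂, c₁, c₂, hc₁, hc₂, hbd⟩ := hsv 1 one_pos
  refine ⟨c₁ / c₂ / 2, by positivity, fun x hx t ⟨hxt, htx⟩ => ?_⟩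
  have hx0 : 0 < x := hx
  have ht0 : 0 < t := by linarith
  have hlx := hl0 x hx
  have hc : 0 ≤ c₁ / c₂ := by positivity
  rcases le_total x t with hle | hle
  · have h := hg₁.div_mul_le_of_le hc₁.le hc₂ (fun u hu => (hbd u hu).1)
      (fun u hu => (hbd u hu).2.1) hx ht0 hle
    simp only [rpow_one] at h
    refine le_of_mul_le_mul_right ?_ ht0
    calc c₁ / c₂ / 2 * l x * t ≤ c₁ / c₂ / 2 * l x * (2 * x) :=
          mul_le_mul_of_nonneg_left htx (mul_nonneg (by positivity) hlx)
      _ = c₁ / c₂ * (x * l x) := by ring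
      _ ≤ t * l t := h
      _ = l t * t := mul_comm _ _
  · have h := hg₂.div_mul_le_of_le hc₁.le hc₂ (fun u hu => (hbd u hu).2.2.1)
      (fun u hu => (hbd u hu).2.2.2) hx ht0 hle
    simp only [rpow_neg_one] at h
    calc c₁ / c₂ / 2 * l x = c₁ / c₂ * (x⁻¹ * l x) * (x / 2) := by field_simp
      _ ≤ t⁻¹ * l t * t :=
        mul_le_mul h hxt (by positivity) ((mul_nonneg hc (by positivity)).trans h)
      _ = l t := by field_simp

theorem ofReal_half_le_setLIntegral_Ioo_two_mul {f : ℝ → ℝ} {a y : ℝ} (ha : 0 < a)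
    (hy : 0 ≤ y) (hf : ∀ t ∈ Ioo a (2 * a), y ≤ f t) :
    ENNReal.ofReal (y / 2) ≤ ∫⁻ t in Ioo a (2 * a), ENNReal.ofReal (t⁻¹ * f t) := by
  have hpt : ∀ t ∈ Ioo a (2 * a),
      ENNReal.ofReal ((2 * a)⁻¹ * y) ≤ ENNReal.ofReal (t⁻¹ * f t) :=
    fun t ⟨hat, hta⟩ => ENNReal.ofReal_le_ofReal <| by
      have ht0 : 0 < t := ha.trans hat
      have := hf t ⟨hat, hta⟩
      gcongr
  calc ENNReal.ofReal (y / 2)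
        = ENNReal.ofReal ((2 * a)⁻¹ * y) * volume (Ioo a (2 * a)) := by
        rw [volume_Ioo, ← ENNReal.ofReal_mul (by positivity)]
        congr 1
        field_simp
        ring
    _ = ∫⁻ _ in Ioo a (2 * a), ENNReal.ofReal ((2 * a)⁻¹ * y) :=
        (setLIntegral_const _ _).symm
    _ ≤ _ := setLIntegral_mono' measurableSet_Ioo hpt

theorem ofReal_half_le_ofReal_rpow_half_rpow_inv {y r : ℝ} (hy : 0 ≤ y) (hr : 1 ≤ r) :
    ENNReal.ofReal (y / 2) ≤ ENNReal.ofReal (y ^ r / 2) ^ r⁻¹ := by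
  have hr0 : 0 < r := by linarith
  rw [ENNReal.ofReal_rpow_of_nonneg (by positivity) (by positivity), div_rpow (by positivity)
    (by norm_num), rpow_rpow_inv hy hr0.ne']
  refine ENNReal.ofReal_le_ofReal (div_le_div_of_nonneg_left hy (by positivity) ?_)
  calc (2 : ℝ) ^ r⁻¹ ≤ 2 ^ (1 : ℝ) :=
        rpow_le_rpow_of_exponent_le (by norm_num) (inv_le_one_of_one_le₀ hr)
    _ = 2 := rpow_one 2

theorem stmt4_general (l : ℝ → ℝ) (hl0 : ∀ t ∈ Set.Ioi (0:ℝ), 0 ≤ l t)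
    (hsv : SlowlyVaryingOn l (Set.Ioi 0)) (r : ℝ) (hr : 1 ≤ r) :
    ∃ c : ℝ, 0 < c ∧ ∀ x ∈ Set.Ioi (0:ℝ),
      ENNReal.ofReal (c * l x) ≤
        (∫⁻ t in Set.Ioo 0 x, ENNReal.ofReal (t⁻¹ * l t ^ r)) ^ r⁻¹ ∧
      ENNReal.ofReal (c * l x) ≤
        (∫⁻ t in Set.Ioi x, ENNReal.ofReal (t⁻¹ * l t ^ r)) ^ r⁻¹ := by
  obtain ⟨B, hB, hBl⟩ := hsv.exists_pos_mul_le_of_mem_Icc hl0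
  refine ⟨B / 2, by positivity, fun x hx => ?_⟩
  have hx0 : 0 < x := hx
  have hBlx : 0 ≤ B * l x := mul_nonneg hB.le (hl0 x hx)
  have hr0 : 0 ≤ r⁻¹ := by positivity
  have bound : ∀ a, 0 < a → Ioo a (2 * a) ⊆ Icc (x / 2) (2 * x) →
      ∀ s, Ioo a (2 * a) ⊆ s →
        ENNReal.ofReal (B / 2 * l x) ≤ (∫⁻ t in s, ENNReal.ofReal (t⁻¹ * l t ^ r)) ^ r⁻¹ := by
    intro a ha hsub s hs
    have hint := ofReal_half_le_setLIntegral_Ioo_two_mul ha (rpow_nonneg hBlx r)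
      fun t ht => rpow_le_rpow hBlx (hBl x hx t (hsub ht)) (by linarith)
    calc ENNReal.ofReal (B / 2 * l x) = ENNReal.ofReal (B * l x / 2) := by ring_nf
      _ ≤ ENNReal.ofReal ((B * l x) ^ r / 2) ^ r⁻¹ :=
        ofReal_half_le_ofReal_rpow_half_rpow_inv hBlx hr
      _ ≤ _ := ENNReal.rpow_le_rpow (hint.trans (lintegral_mono_set hs)) hr0
  constructor
  · refine bound (x / 2) (by positivity) ?_ _ ?_
    · rw [mul_div_cancel₀ x two_ne_zero]
      exact Ioo_subset_Icc_self.trans (Icc_subset_Icc_right (by linarith))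
    · rw [mul_div_cancel₀ x two_ne_zero]
      exact Ioo_subset_Ioo_left (by positivity)
  · exact bound x hx0 (Ioo_subset_Icc_self.trans (Icc_subset_Icc_left (by linarith)))
      _ fun _ ht => ht.1

theorem stmt4 (l : ℝ → ℝ) (hl0 : ∀ t ∈ Set.Ioi (0:ℝ), 0 ≤ l t) (hlm : Measurable l)
    (hsv : SlowlyVaryingOn l (Set.Ioi 0)) (r : ℝ) (hr : 1 ≤ r) :
    ∃ c : ℝ, 0 < c ∧ ∀ x ∈ Set.Ioi (0:ℝ),
      ENNReal.ofReal (c * l x) ≤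
        (∫⁻ t in Set.Ioo 0 x, ENNReal.ofReal (t⁻¹ * l t ^ r)) ^ r⁻¹ ∧
      ENNReal.ofReal (c * l x) ≤
        (∫⁻ t in Set.Ioi x, ENNReal.ofReal (t⁻¹ * l t ^ r)) ^ r⁻¹ :=
  stmt4_general l hl0 hsv r hr
end

section
/- (Necessity in Lemma TLH.) Let 1 ≤ r ≤ s ≤ ∞, a, b slowly varying on (0,∞), μ > 0, κ ∈ ℝ, and suppose there is C > 0 such that ‖ t^{−μ−1/s} b(t) ∫₀ᵗ u^{κ−1} g(u) du ‖_{L^s(0,∞)} ≤ C ‖ t^{−μ+κ−1/r} a(t) g(t) ‖_{L^r(0,∞)} for all measurable g ≥ 0. Then sup_{x>0} b(x)/a(x) < ∞. -/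
/-!
Test the inequality against `g = u^(1-κ) 1_(x/2, x)`, for which `u^(κ-1) g(u)` is the indicator
of `(x/2, x)`. The inner integral is then `x/2` for every `t ≥ x`, so restricting the left-hand
side to `t ∈ (x, 2x)` bounds it below by a multiple of `x^(1-μ) b(x)`, while the right-hand side is
at most a multiple of `x^(1-μ) a(x)`. Both estimates rest on the fact that a slowly varying
function, and hence every weight `t^γ a(t)`, is comparable on `[x/2, 2x]` to its value at `x`,
with constants independent of `x`.
-/

open MeasureTheory Set Real
open scoped ENNReal

/-- The (extended) Lebesgue `L^s` functional over the set `I` for `ℝ≥0∞`-valued functions,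
with `s ∈ [1,∞]`. -/
noncomputable def elp (s : ℝ≥0∞) (I : Set ℝ) (F : ℝ → ℝ≥0∞) : ℝ≥0∞ :=
  if s = ⊤ then essSup F (MeasureTheory.volume.restrict I)
  else (∫⁻ t in I, F t ^ s.toReal) ^ s.toReal⁻¹

theorem SlowlyVaryingOn.exists_almost_monotone {a : ℝ → ℝ} {I : Set ℝ}
    (ha : SlowlyVaryingOn a I) {ε : ℝ} (hε : 0 < ε) :
    ∃ K, 0 < K ∧ ∀ t ∈ I, ∀ x ∈ I, t ≤ x →
      t ^ ε * a t ≤ K * (x ^ ε * a x) ∧ x ^ (-ε) * a x ≤ K * (t ^ (-ε) * a t) := by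
  obtain ⟨g₁, g₂, hg₁, hg₂, c₁, c₂, hc₁, hc₂, h⟩ := ha ε hε
  refine ⟨c₂ / c₁, div_pos hc₂ hc₁, fun t ht x hx htx => ⟨?_, ?_⟩⟩
  · calc t ^ ε * a t ≤ c₂ * g₁ t := (h t ht).2.1
      _ ≤ c₂ * g₁ x := by gcongr; exact hg₁ ht hx htx
      _ ≤ c₂ / c₁ * (x ^ ε * a x) := by
        rw [div_mul_eq_mul_div, le_div_iff₀ hc₁, mul_assoc, mul_comm (g₁ x)]
        exact mul_le_mul_of_nonneg_left (h x hx).1 hc₂.le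
  · calc x ^ (-ε) * a x ≤ c₂ * g₂ x := (h x hx).2.2.2
      _ ≤ c₂ * g₂ t := by gcongr; exact hg₂ ht hx htx
      _ ≤ c₂ / c₁ * (t ^ (-ε) * a t) := by
        rw [div_mul_eq_mul_div, le_div_iff₀ hc₁, mul_assoc, mul_comm (g₂ t)]
        exact mul_le_mul_of_nonneg_left (h t ht).2.2.1 hc₂.le

def LocallyComparable (w : ℝ → ℝ) : Prop :=
  ∃ D, 0 < D ∧ ∀ x, 0 < x → ∀ t ∈ Icc (x / 2) (2 * x), w t ≤ D * w x

theorem SlowlyVaryingOn.locallyComparable {a : ℝ → ℝ} (ha : SlowlyVaryingOn a (Ioi 0))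
    (ha0 : ∀ t ∈ Ioi (0 : ℝ), 0 ≤ a t) : LocallyComparable a := by
  obtain ⟨K, hK, h⟩ := ha.exists_almost_monotone one_pos
  refine ⟨2 * K, by positivity, fun x hx t ⟨htl, htu⟩ => ?_⟩
  have ht : 0 < t := by linarith
  have hax := ha0 x hx
  rcases le_total t x with htx | hxt
  · have h1 := (h t ht x hx htx).1
    rw [rpow_one, rpow_one] at h1
    refine le_of_mul_le_mul_left ?_ ht
    calc t * a t ≤ K * (x * a x) := h1
      _ ≤ K * (2 * t * a x) := by gcongr; linarith
      _ = t * (2 * K * a x) := by ring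
  · have h1 := (h x hx t ht hxt).2
    rw [rpow_neg_one, rpow_neg_one, inv_mul_le_iff₀ ht] at h1
    calc a t ≤ t * (K * (x⁻¹ * a x)) := h1
      _ = K * (t / x) * a x := by ring
      _ ≤ K * 2 * a x := by gcongr; rw [div_le_iff₀ hx]; linarith
      _ = 2 * K * a x := by ring

theorem rpow_le_two_rpow_abs_mul_rpow {x t : ℝ} (hx : 0 < x) (ht : t ∈ Icc (x / 2) (2 * x))
    (γ : ℝ) : t ^ γ ≤ 2 ^ |γ| * x ^ γ := by
  have ht0 : 0 < t := by linarith [ht.1]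
  rcases le_total 0 γ with hγ | hγ
  · calc t ^ γ ≤ (2 * x) ^ γ := rpow_le_rpow ht0.le ht.2 hγ
      _ = 2 ^ |γ| * x ^ γ := by rw [abs_of_nonneg hγ, mul_rpow zero_le_two hx.le]
  · calc t ^ γ ≤ (x / 2) ^ γ := rpow_le_rpow_of_nonpos (by positivity) ht.1 hγ
      _ = 2 ^ |γ| * x ^ γ := by
        rw [abs_of_nonpos hγ, div_rpow hx.le zero_le_two, rpow_neg zero_le_two, div_eq_inv_mul]

theorem locallyComparable_rpow (γ : ℝ) : LocallyComparable (· ^ γ) :=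
  ⟨2 ^ |γ|, by positivity, fun _ hx _ ht => rpow_le_two_rpow_abs_mul_rpow hx ht γ⟩

theorem LocallyComparable.mul {f g : ℝ → ℝ} (hf : LocallyComparable f) (hg : LocallyComparable g)
    (hf0 : ∀ t ∈ Ioi (0 : ℝ), 0 ≤ f t) (hg0 : ∀ t ∈ Ioi (0 : ℝ), 0 ≤ g t) :
    LocallyComparable (fun t => f t * g t) := by
  obtain ⟨Df, hDf, hf⟩ := hf
  obtain ⟨Dg, hDg, hg⟩ := hg
  refine ⟨Df * Dg, by positivity, fun x hx t ht => ?_⟩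
  have ht0 : 0 < t := by linarith [ht.1]
  calc f t * g t ≤ Df * f x * (Dg * g x) :=
        mul_le_mul (hf x hx t ht) (hg x hx t ht) (hg0 t ht0) (by have := hf0 x hx; positivity)
    _ = Df * Dg * (f x * g x) := by ring

theorem elp_mono {s : ℝ≥0∞} {I : Set ℝ} {F G : ℝ → ℝ≥0∞} (hFG : F ≤ G) :
    elp s I F ≤ elp s I G := by
  unfold elp
  split_ifs
  · exact essSup_mono_ae (Filter.Eventually.of_forall hFG)
  · gcongr with t
    exact hFG t

theorem elp_indicator_const {s : ℝ≥0∞} (hs : s ≠ 0) {I J : Set ℝ} (hJ : MeasurableSet J)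
    (hJI : J ⊆ I) (hJ0 : volume J ≠ 0) (c : ℝ≥0∞) :
    elp s I (J.indicator fun _ => c) = c * volume J ^ s.toReal⁻¹ := by
  unfold elp
  split_ifs with hs_top
  · have hne : volume.restrict J ≠ 0 := by rwa [Ne, Measure.restrict_eq_zero]
    rw [ENNReal.essSup_indicator_eq_essSup_restrict hJ, Measure.restrict_restrict_of_subset hJI,
      essSup_const c hne, hs_top, ENNReal.toReal_top, inv_zero, ENNReal.rpow_zero, mul_one]
  · have hp : 0 < s.toReal := ENNReal.toReal_pos hs hs_top
    have hpow : (fun t => J.indicator (fun _ => c) t ^ s.toReal) =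
        J.indicator fun _ => c ^ s.toReal := by
      ext t
      by_cases ht : t ∈ J
      · simp [ht]
      · simp [ht, ENNReal.zero_rpow_of_pos hp]
    rw [hpow, lintegral_indicator_const hJ, Measure.restrict_apply hJ, inter_eq_left.mpr hJI,
      ENNReal.mul_rpow_of_nonneg _ _ (by positivity), ← ENNReal.rpow_mul,
      mul_inv_cancel₀ hp.ne', ENNReal.rpow_one]

theorem elp_indicator_Ioo {s : ℝ≥0∞} (hs : s ≠ 0) {x y : ℝ} (hx : 0 ≤ x) (hxy : x < y)
    (c : ℝ≥0∞) :
    elp s (Ioi 0) ((Ioo x y).indicator fun _ => c) = c * ENNReal.ofReal (y - x) ^ s.toReal⁻¹ := by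
  rw [elp_indicator_const hs measurableSet_Ioo (fun _ ht => mem_Ioi.mpr (hx.trans_lt ht.1))
    (by simpa using hxy), Real.volume_Ioo]

noncomputable def hardyTestFun (κ x : ℝ) : ℝ → ℝ :=
  (Ioo (x / 2) x).indicator fun u => u ^ (1 - κ)

theorem measurable_hardyTestFun (κ x : ℝ) : Measurable (hardyTestFun κ x) :=
  (measurable_id.pow_const _).indicator measurableSet_Ioo

theorem hardyTestFun_nonneg (κ x u : ℝ) : 0 ≤ hardyTestFun κ x u := by
  unfold hardyTestFun
  by_cases hu : u ∈ Ioo (x / 2) x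
  · rw [indicator_of_mem hu]
    exact rpow_nonneg (by linarith [hu.1, hu.2]) _
  · rw [indicator_of_notMem hu]

theorem rpow_mul_hardyTestFun (κ x u : ℝ) :
    u ^ (κ - 1) * hardyTestFun κ x u = (Ioo (x / 2) x).indicator 1 u := by
  unfold hardyTestFun
  by_cases hu : u ∈ Ioo (x / 2) x
  · have hu0 : 0 < u := by linarith [hu.1, hu.2]
    rw [indicator_of_mem hu, indicator_of_mem hu, ← rpow_add hu0]
    simp
  · simp [hu]

theorem lintegral_hardyTestFun (κ : ℝ) {x t : ℝ} (hx : 0 < x) (hxt : x ≤ t) :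
    ∫⁻ u in Ioo 0 t, ENNReal.ofReal (u ^ (κ - 1) * hardyTestFun κ x u) =
      ENNReal.ofReal (x / 2) := by
  have hsub : Ioo (x / 2) x ⊆ Ioo 0 t := fun u hu => ⟨by linarith [hu.1], hu.2.trans_le hxt⟩
  have hind (u : ℝ) :
      ENNReal.ofReal ((Ioo (x / 2) x).indicator 1 u) = (Ioo (x / 2) x).indicator 1 u := by
    by_cases hu : u ∈ Ioo (x / 2) x <;> simp [hu]
  simp_rw [rpow_mul_hardyTestFun, hind]
  rw [lintegral_indicator_one measurableSet_Ioo, Measure.restrict_apply measurableSet_Ioo,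
    inter_eq_left.mpr hsub, Real.volume_Ioo]
  ring_nf

theorem ofReal_le_elp_hardyTestFun {s : ℝ≥0∞} (hs : s ≠ 0) (κ : ℝ) {x c : ℝ} (hx : 0 < x)
    (hc : 0 ≤ c) {w : ℝ → ℝ} (hw : ∀ t ∈ Ioo x (2 * x), c ≤ w t) :
    ENNReal.ofReal (c * (x / 2) * x ^ s.toReal⁻¹) ≤
      elp s (Ioi 0) fun t => ENNReal.ofReal (w t) *
        ∫⁻ u in Ioo 0 t, ENNReal.ofReal (u ^ (κ - 1) * hardyTestFun κ x u) := by
  have hbump := elp_indicator_Ioo hs hx.le (by linarith : x < 2 * x)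
    (ENNReal.ofReal (c * (x / 2)))
  rw [show 2 * x - x = x by ring, ENNReal.ofReal_rpow_of_pos hx,
    ← ENNReal.ofReal_mul (by positivity)] at hbump
  rw [← hbump]
  refine elp_mono fun t => ?_
  by_cases ht : t ∈ Ioo x (2 * x)
  · rw [indicator_of_mem ht, lintegral_hardyTestFun κ hx ht.1.le, ENNReal.ofReal_mul hc]
    gcongr
    exact hw t ht
  · rw [indicator_of_notMem ht]
    exact zero_le

theorem elp_hardyTestFun_le {r : ℝ≥0∞} (hr : r ≠ 0) (κ : ℝ) {x c : ℝ} (hx : 0 < x)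
    (hc : 0 ≤ c) {v : ℝ → ℝ} (hv : ∀ t ∈ Ioo (x / 2) x, v t * t ^ (1 - κ) ≤ c) :
    elp r (Ioi 0) (fun t => ENNReal.ofReal (v t * hardyTestFun κ x t)) ≤
      ENNReal.ofReal (c * (x / 2) ^ r.toReal⁻¹) := by
  have hbump := elp_indicator_Ioo hr (by positivity : 0 ≤ x / 2) (by linarith : x / 2 < x)
    (ENNReal.ofReal c)
  rw [show x - x / 2 = x / 2 by ring, ENNReal.ofReal_rpow_of_pos (by positivity),
    ← ENNReal.ofReal_mul hc] at hbump
  rw [← hbump]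
  refine elp_mono fun t => ?_
  unfold hardyTestFun
  by_cases ht : t ∈ Ioo (x / 2) x
  · rw [indicator_of_mem ht, indicator_of_mem ht]
    exact ENNReal.ofReal_le_ofReal (hv t ht)
  · simp [ht]

theorem le_of_rpow_scaling_le {μ p q x u v C Da Db : ℝ} (hx : 0 < x) (hq : 0 ≤ q)
    (hC : 0 ≤ C) (hDa : 0 ≤ Da) (hDb : 0 < Db) (hv : 0 ≤ v)
    (h : x ^ (-μ - p) * u / Db * (x / 2) * x ^ p ≤
      C * (Da * (x ^ (-μ + 1 - q) * v) * (x / 2) ^ q)) :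
    u ≤ 2 * C * Da * Db * v := by
  have hpow_u : x ^ (-μ - p) * x ^ p = x ^ (-μ) := by rw [← rpow_add hx]; ring_nf
  have hpow_v : x ^ (-μ + 1 - q) * (x / 2) ^ q ≤ x ^ (-μ) * x :=
    calc x ^ (-μ + 1 - q) * (x / 2) ^ q ≤ x ^ (-μ + 1 - q) * x ^ q := by
          gcongr
          linarith
      _ = x ^ (-μ) * x := by rw [← rpow_add hx, ← rpow_add_one hx.ne']; ring_nf
  refine le_of_mul_le_mul_right ?_ (by positivity : 0 < x ^ (-μ) * x)
  calc u * (x ^ (-μ) * x) = 2 * Db * (x ^ (-μ - p) * u / Db * (x / 2) * x ^ p) := by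
        rw [← hpow_u]; field_simp
    _ ≤ 2 * Db * (C * (Da * (x ^ (-μ + 1 - q) * v) * (x / 2) ^ q)) := by gcongr
    _ = 2 * C * Da * Db * v * (x ^ (-μ + 1 - q) * (x / 2) ^ q) := by ring
    _ ≤ 2 * C * Da * Db * v * (x ^ (-μ) * x) := by gcongr

theorem stmt9_general (r s : ℝ≥0∞) (hr : 1 ≤ r) (hrs : r ≤ s)
    (a b : ℝ → ℝ) (ha0 : ∀ t ∈ Set.Ioi (0:ℝ), 0 ≤ a t) (hb0 : ∀ t ∈ Set.Ioi (0:ℝ), 0 ≤ b t)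
    (hsva : SlowlyVaryingOn a (Set.Ioi 0)) (hsvb : SlowlyVaryingOn b (Set.Ioi 0))
    (μ κ : ℝ) (C : ℝ) (hC : 0 < C)
    (hineq : ∀ g : ℝ → ℝ, Measurable g → (∀ u, 0 ≤ g u) →
      elp s (Set.Ioi 0) (fun t => ENNReal.ofReal (t ^ (-μ - s.toReal⁻¹) * b t) *
          ∫⁻ u in Set.Ioo 0 t, ENNReal.ofReal (u ^ (κ - 1) * g u)) ≤
        ENNReal.ofReal C *
          elp r (Set.Ioi 0) (fun t => ENNReal.ofReal (t ^ (-μ + κ - r.toReal⁻¹) * a t * g t))) :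
    ∃ K : ℝ, 0 < K ∧ ∀ x ∈ Set.Ioi (0:ℝ), b x ≤ K * a x := by
  have hr0 : r ≠ 0 := (zero_lt_one.trans_le hr).ne'
  have hs0 : s ≠ 0 := (zero_lt_one.trans_le (hr.trans hrs)).ne'
  set p := s.toReal⁻¹
  set q := r.toReal⁻¹
  obtain ⟨Da, hDa, hwa⟩ := (locallyComparable_rpow (-μ + 1 - q)).mul
    (hsva.locallyComparable ha0) (fun t ht => rpow_nonneg (le_of_lt ht) _) ha0
  obtain ⟨Db, hDb, hwb⟩ := (locallyComparable_rpow (-μ - p)).mul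
    (hsvb.locallyComparable hb0) (fun t ht => rpow_nonneg (le_of_lt ht) _) hb0
  refine ⟨2 * C * Da * Db, by positivity, fun x hx => ?_⟩
  have hx0 : (0 : ℝ) < x := hx
  have hax := ha0 x hx
  have hbx := hb0 x hx
  have hlow := ofReal_le_elp_hardyTestFun hs0 κ hx0 (c := x ^ (-μ - p) * b x / Db)
    (w := fun t => t ^ (-μ - p) * b t) (by positivity) fun t ht => by
      rw [div_le_iff₀ hDb]
      exact (hwb t (by linarith [ht.1]) x ⟨by linarith [ht.2], by linarith [ht.1]⟩).trans_eq
        (mul_comm _ _)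
  have hup := elp_hardyTestFun_le hr0 κ hx0 (c := Da * (x ^ (-μ + 1 - q) * a x))
    (v := fun t => t ^ (-μ + κ - q) * a t) (by positivity) fun t ht => by
      have ht0 : 0 < t := by linarith [ht.1]
      calc t ^ (-μ + κ - q) * a t * t ^ (1 - κ) = t ^ (-μ + 1 - q) * a t := by
            rw [mul_right_comm, ← rpow_add ht0]; ring_nf
        _ ≤ _ := hwa x hx0 t ⟨ht.1.le, by linarith [ht.2]⟩
  have key := (hlow.trans (hineq _ (measurable_hardyTestFun κ x)
    (hardyTestFun_nonneg κ x))).trans (mul_le_mul_right hup _)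
  rw [← ENNReal.ofReal_mul hC.le, ENNReal.ofReal_le_ofReal_iff (by positivity)] at key
  exact le_of_rpow_scaling_le hx0 (by positivity) hC.le hDa.le hDb hax key

theorem stmt9 (r s : ℝ≥0∞) (hr : 1 ≤ r) (hrs : r ≤ s)
    (a b : ℝ → ℝ) (ha0 : ∀ t ∈ Set.Ioi (0:ℝ), 0 ≤ a t) (hb0 : ∀ t ∈ Set.Ioi (0:ℝ), 0 ≤ b t)
    (hsva : SlowlyVaryingOn a (Set.Ioi 0)) (hsvb : SlowlyVaryingOn b (Set.Ioi 0))
    (μ κ : ℝ) (hμ : 0 < μ) (C : ℝ) (hC : 0 < C)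
    (hineq : ∀ g : ℝ → ℝ, Measurable g → (∀ u, 0 ≤ g u) →
      elp s (Set.Ioi 0) (fun t => ENNReal.ofReal (t ^ (-μ - s.toReal⁻¹) * b t) *
          ∫⁻ u in Set.Ioo 0 t, ENNReal.ofReal (u ^ (κ - 1) * g u)) ≤
        ENNReal.ofReal C *
          elp r (Set.Ioi 0) (fun t => ENNReal.ofReal (t ^ (-μ + κ - r.toReal⁻¹) * a t * g t))) :
    ∃ K : ℝ, 0 < K ∧ ∀ x ∈ Set.Ioi (0:ℝ), b x ≤ K * a x :=
  stmt9_general r s hr hrs a b ha0 hb0 hsva hsvb μ κ C hC hineq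
end
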